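/- Let α be a finite alphabet with two distinct letters a and b. Then each of the families of symmetric definite, left-sided comet, right-sided comet, and two-sided comet languages over α is incomparable to each of the families of suffix-closed, circular, and commutative languages over α. -/

import Mathlib

open Language Computability

universe u

variable {α : Type}

/-- The n-fold repetition (power) of a word. -/
def wordPow (y : List α) : ℕ → List α
  | 0 => []
  | n + 1 => y ++ wordPow y n

/-- A star language: the Kleene star of some regular language. -/
def IsStarLang (L : Language α) : Prop :=
  ∃ H : Language α, H.IsRegular ∧ L = H∗

/-- A left-sided comet. -/
def IsLeftComet (L : Language α) : Prop :=
  ∃ E G : Language α, E.IsRegular ∧ G.IsRegular ∧ G ≠ 0 ∧ G ≠ 1 ∧ L = E * G∗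

/-- A right-sided comet. -/
def IsRightComet (L : Language α) : Prop :=
  ∃ G H : Language α, G.IsRegular ∧ H.IsRegular ∧ G ≠ 0 ∧ G ≠ 1 ∧ L = G∗ * H

/-- A two-sided comet. -/
def IsTwoComet (L : Language α) : Prop :=
  ∃ E G H : Language α, E.IsRegular ∧ G.IsRegular ∧ H.IsRegular ∧
    G ≠ 0 ∧ G ≠ 1 ∧ L = E * G∗ * H

/-- A regular expression is union-free if it is built from the atoms `0` (empty language)
and single letters using only concatenation and Kleene star. -/
def RegularExpression.UnionFree : RegularExpression α → Prop
  | RegularExpression.zero => True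
  | RegularExpression.epsilon => False
  | RegularExpression.char _ => True
  | RegularExpression.plus _ _ => False
  | RegularExpression.comp r s => r.UnionFree ∧ s.UnionFree
  | RegularExpression.star r => r.UnionFree

/-- A union-free language: the language of a union-free regular expression. -/
def IsUnionFree (L : Language α) : Prop :=
  ∃ r : RegularExpression α, r.UnionFree ∧ r.matches' = L

/-- A monoidal language. -/
def IsMonoidal (L : Language α) : Prop := L = (⊤ : Language α)

/-- The language of one-letter words with letters from `X`. -/
def lettersLang (X : Set α) : Language α := {w : List α | ∃ a ∈ X, w = [a]}

/-- A combinational language: `⊤ · X` for a set `X` of one-letter words. -/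
def IsCombinational (L : Language α) : Prop :=
  ∃ X : Set α, L = (⊤ : Language α) * lettersLang X

/-- A symmetric definite language: `E · ⊤ · H` with `E, H` regular. -/
def IsSymDef (L : Language α) : Prop :=
  ∃ E H : Language α, E.IsRegular ∧ H.IsRegular ∧ L = E * (⊤ : Language α) * H

/-- A nilpotent language: finite or with finite complement. -/
def IsNilpotentLang (L : Language α) : Prop := L.Finite ∨ (Lᶜ : Language α).Finite

/-- A definite language: `A ∪ ⊤ · B` with `A, B` finite. -/
def IsDefinite (L : Language α) : Prop :=
  ∃ A B : Language α, A.Finite ∧ B.Finite ∧ L = A + (⊤ : Language α) * B  -- `+` of languages is union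

/-- An ordered language: accepted by a DFA with linearly ordered state set
whose transition maps are all monotone. -/
def IsOrdered (L : Language α) : Prop :=
  ∃ (σ : Type) (_ : Fintype σ) (_ : LinearOrder σ) (M : DFA α σ),
    (∀ a : α, Monotone fun q => M.step q a) ∧ M.accepts = L

/-- The non-counting property. -/
def HasNonCounting (L : Language α) : Prop :=
  ∃ k : ℕ, 1 ≤ k ∧ ∀ x y z : List α,
    (x ++ wordPow y k ++ z ∈ L ↔ x ++ wordPow y (k + 1) ++ z ∈ L)

/-- A non-counting (star-free) regular language. -/
def IsNonCounting (L : Language α) : Prop := L.IsRegular ∧ HasNonCounting L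

/-- The power-separating property. -/
def HasPowerSep (L : Language α) : Prop :=
  ∃ m : ℕ, 1 ≤ m ∧ ∀ x : List α,
    (∀ n, m ≤ n → wordPow x n ∉ L) ∨ (∀ n, m ≤ n → wordPow x n ∈ L)

/-- A power-separating regular language. -/
def IsPowerSep (L : Language α) : Prop := L.IsRegular ∧ HasPowerSep L

/-- A suffix-closed (regular) language. -/
def IsSuffixClosed (L : Language α) : Prop :=
  L.IsRegular ∧ ∀ x y : List α, x ++ y ∈ L → y ∈ L

/-- A circular (regular) language. -/
def IsCircular (L : Language α) : Prop :=
  L.IsRegular ∧ ∀ u v : List α, u ++ v ∈ L → v ++ u ∈ L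

/-- A commutative (regular) language. -/
def IsCommutative (L : Language α) : Prop :=
  L.IsRegular ∧ ∀ w ∈ L, ∀ v : List α, w.Perm v → v ∈ L

/-- The reversal of a language. -/
def Reversal (L : Language α) : Language α := {w : List α | ∃ v ∈ L, w = v.reverse}

/-- Two families of languages are incomparable if neither is contained in the other. -/
def Incomparable (P Q : Language α → Prop) : Prop :=
  (∃ L : Language α, P L ∧ ¬ Q L) ∧ (∃ L : Language α, Q L ∧ ¬ P L)

/-- A finite language. -/
def IsFiniteLang (L : Language α) : Prop := L.Finite

/-!
The language `a·⊤` of words starting with `a` is symmetric definite (`a·⊤·{ε}`), a left-sided comet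
(`a⊤·a∗`), a right-sided comet (`a∗·a⊤`) and hence a two-sided comet; but it is not suffix-closed
(`a` is in it, `ε` is not) and not circular, let alone commutative (`ab` is in it, `ba` is not).
Conversely `{ε}` is suffix-closed, circular and commutative, yet no language `E·G·H` with a nonempty
word in `G` equals `{ε}`: once it contains `ε`, it contains that word too.
-/

section KleeneAlgebra

variable {K : Type*} [KleeneAlgebra K] [OrderTop K]

theorem kstar_mul_mul_top (a : K) : a∗ * (a * ⊤) = a * ⊤ := by
  refine le_antisymm (kstar_mul_le_self (mul_le_mul_right le_top a)) ?_
  simpa using mul_le_mul_left (one_le_kstar (a := a)) (a * ⊤)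

theorem mul_top_mul_kstar (a : K) : a * ⊤ * a∗ = a * ⊤ := by
  refine le_antisymm (mul_kstar_le_self ?_) ?_
  · rw [mul_assoc]
    exact mul_le_mul_right le_top a
  · simpa using mul_le_mul_right (one_le_kstar (a := a)) (a * ⊤)

end KleeneAlgebra

namespace Language

variable {α : Type*} {L : Language α}

theorem IsRegular.of_finite (hL : Set.Finite L) : L.IsRegular := by
  refine .of_finite_range_leftQuotient <|
    ((hL.biUnion fun w _ => w.tails.finite_toSet).finite_subsets).subset ?_
  rintro _ ⟨x, rfl⟩ y hy
  exact Set.mem_biUnion hy ((List.mem_tails _ _).mpr (List.suffix_append x y))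

theorem isRegular_one : (1 : Language α).IsRegular :=
  .of_finite (Set.finite_singleton [])

theorem isRegular_singleton (w : List α) : ({w} : Language α).IsRegular :=
  .of_finite (Set.finite_singleton w)

theorem isRegular_top : (⊤ : Language α).IsRegular := by
  have h0 : (0 : Language α).IsRegular := .of_finite Set.finite_empty
  simpa [← bot_eq_zero] using h0.compl

@[simp]
theorem mem_singleton {v w : List α} : w ∈ ({v} : Language α) ↔ w = v := Iff.rfl

theorem cons_mem_singleton_mul {a c : α} {w : List α} :
    c :: w ∈ {[a]} * L ↔ c = a ∧ w ∈ L := by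
  simp [mem_mul, eq_comm, and_comm]

theorem nil_notMem_singleton_mul {a : α} : [] ∉ ({[a]} * L : Language α) := by
  simp [mem_mul]

theorem leftQuotient_singleton_mul_cons_self (a : α) (t : List α) :
    ({[a]} * L).leftQuotient (a :: t) = L.leftQuotient t := by
  ext y
  simp [cons_mem_singleton_mul]

theorem leftQuotient_singleton_mul_cons_of_ne {a c : α} (h : c ≠ a) (t : List α) :
    ({[a]} * L).leftQuotient (c :: t) = 0 := by
  ext y
  simp [cons_mem_singleton_mul, h, notMem_zero]

theorem IsRegular.singleton_mul (hL : L.IsRegular) (a : α) : ({[a]} * L).IsRegular := by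
  refine .of_finite_range_leftQuotient <|
    ((hL.finite_range_leftQuotient.insert 0).insert ({[a]} * L)).subset ?_
  rintro _ ⟨_ | ⟨c, t⟩, rfl⟩
  · exact Set.mem_insert _ _
  · by_cases h : c = a
    · rw [h, leftQuotient_singleton_mul_cons_self]
      exact .inr (.inr ⟨t, rfl⟩)
    · rw [leftQuotient_singleton_mul_cons_of_ne h]
      exact .inr (.inl rfl)

theorem singleton_ne_zero (w : List α) : ({w} : Language α) ≠ 0 :=
  fun h => notMem_zero w (h ▸ rfl)

theorem singleton_ne_one {w : List α} (hw : w ≠ []) : ({w} : Language α) ≠ 1 :=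
  fun h => hw ((mem_one w).mp (h ▸ rfl))

theorem exists_mem_ne_nil {G : Language α} (h0 : G ≠ 0) (h1 : G ≠ 1) : ∃ g ∈ G, g ≠ [] := by
  by_contra! h
  obtain ⟨g, hg⟩ := Set.nonempty_iff_ne_empty.mpr h0
  exact h1 (ext fun w => ⟨fun hw => h w hw, fun hw => (mem_one w).mp hw ▸ h g hg ▸ hg⟩)

theorem mul_mul_ne_one {E G H : Language α} {g : List α} (hg : g ∈ G) (hg0 : g ≠ []) :
    E * G * H ≠ 1 := by
  intro h
  obtain ⟨_, ⟨e, he, -, -, -⟩, k, hk, -⟩ := mem_mul.mp (h ▸ nil_mem_one)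
  have hegk : e ++ g ++ k ∈ E * G * H := append_mem_mul (append_mem_mul he hg) hk
  rw [h, mem_one, List.append_eq_nil_iff, List.append_eq_nil_iff] at hegk
  exact hg0 hegk.1.2

end Language

section Families

variable {α : Type} {L : Language α}

theorem IsTwoComet.ne_one (h : IsTwoComet L) : L ≠ 1 := by
  obtain ⟨E, G, H, -, -, -, hG0, hG1, rfl⟩ := h
  obtain ⟨g, hg, hg0⟩ := exists_mem_ne_nil hG0 hG1
  exact mul_mul_ne_one (le_kstar (a := G) hg) hg0

theorem IsSymDef.ne_one [Nonempty α] (h : IsSymDef L) : L ≠ 1 := by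
  obtain ⟨E, H, -, -, rfl⟩ := h
  exact mul_mul_ne_one (g := [Classical.arbitrary α]) trivial (List.cons_ne_nil _ _)

theorem isSymDef_singleton_mul_top (a : α) : IsSymDef ({[a]} * ⊤ : Language α) :=
  ⟨{[a]}, 1, isRegular_singleton [a], isRegular_one, (mul_one _).symm⟩

theorem isLeftComet_singleton_mul_top (a : α) : IsLeftComet ({[a]} * ⊤ : Language α) :=
  ⟨{[a]} * ⊤, {[a]}, isRegular_top.singleton_mul a, isRegular_singleton [a],
    singleton_ne_zero [a], singleton_ne_one (List.cons_ne_nil _ _), (mul_top_mul_kstar _).symm⟩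

theorem isRightComet_singleton_mul_top (a : α) : IsRightComet ({[a]} * ⊤ : Language α) :=
  ⟨{[a]}, {[a]} * ⊤, isRegular_singleton [a], isRegular_top.singleton_mul a,
    singleton_ne_zero [a], singleton_ne_one (List.cons_ne_nil _ _), (kstar_mul_mul_top _).symm⟩

theorem IsLeftComet.isTwoComet (h : IsLeftComet L) : IsTwoComet L := by
  obtain ⟨E, G, hE, hG, hG0, hG1, rfl⟩ := h
  exact ⟨E, G, 1, hE, hG, isRegular_one, hG0, hG1, (mul_one _).symm⟩

theorem IsRightComet.isTwoComet (h : IsRightComet L) : IsTwoComet L := by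
  obtain ⟨G, H, hG, hH, hG0, hG1, rfl⟩ := h
  exact ⟨1, G, H, isRegular_one, hG, hH, hG0, hG1, by rw [one_mul]⟩

theorem IsSuffixClosed.nil_mem (h : IsSuffixClosed L) {w : List α} (hw : w ∈ L) : [] ∈ L :=
  h.2 w [] (by simpa using hw)

theorem IsCommutative.isCircular (h : IsCommutative L) : IsCircular L :=
  ⟨h.1, fun _ _ huv => h.2 _ huv _ List.perm_append_comm⟩

theorem isSuffixClosed_one : IsSuffixClosed (1 : Language α) :=
  ⟨isRegular_one, fun _ _ h => (List.append_eq_nil_iff.mp ((mem_one _).mp h)).2⟩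

theorem isCommutative_one : IsCommutative (1 : Language α) :=
  ⟨isRegular_one, fun w hw v hv => by
    rw [mem_one] at hw ⊢
    exact List.nil_perm.mp (hw ▸ hv)⟩

end Families

theorem sydef_comets_incomparable_suf_circ_comm_general (a b : α) (hab : a ≠ b) :
    ∀ P ∈ ([IsSymDef, IsLeftComet, IsRightComet, IsTwoComet] : List (Language α → Prop)),
    ∀ Q ∈ ([IsSuffixClosed, IsCircular, IsCommutative] : List (Language α → Prop)),
    Incomparable P Q := by
  have : Nonempty α := ⟨a⟩
  set L : Language α := {[a]} * ⊤
  have hnil : [] ∉ L := nil_notMem_singleton_mul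
  have hab_mem : [a] ++ [b] ∈ L := cons_mem_singleton_mul.mpr ⟨rfl, trivial⟩
  have hba_notMem : [b] ++ [a] ∉ L := fun h => hab (cons_mem_singleton_mul.mp h).1.symm
  have not_circular : ¬ IsCircular L := fun h => hba_notMem (h.2 _ _ hab_mem)
  intro P hP Q hQ
  simp only [List.mem_cons, List.not_mem_nil, or_false] at hP hQ
  have hP' : P L ∧ ¬ P 1 := by
    rcases hP with rfl | rfl | rfl | rfl
    · exact ⟨isSymDef_singleton_mul_top a, fun h => h.ne_one rfl⟩
    · exact ⟨isLeftComet_singleton_mul_top a, fun h => h.isTwoComet.ne_one rfl⟩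
    · exact ⟨isRightComet_singleton_mul_top a, fun h => h.isTwoComet.ne_one rfl⟩
    · exact ⟨(isLeftComet_singleton_mul_top a).isTwoComet, fun h => h.ne_one rfl⟩
  have hQ' : Q 1 ∧ ¬ Q L := by
    rcases hQ with rfl | rfl | rfl
    · exact ⟨isSuffixClosed_one, fun h => hnil (h.nil_mem hab_mem)⟩
    · exact ⟨isCommutative_one.isCircular, not_circular⟩
    · exact ⟨isCommutative_one, fun h => not_circular h.isCircular⟩
  exact ⟨⟨L, hP'.1, hQ'.2⟩, ⟨1, hQ'.1, hP'.2⟩⟩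

/-- `SYDEF`, `LCOM`, `RCOM`, and `2COM` are each incomparable to each of
`SUF`, `CIRC`, and `COMM`. -/
theorem sydef_comets_incomparable_suf_circ_comm [Fintype α] (a b : α) (hab : a ≠ b) :
    ∀ P ∈ ([IsSymDef, IsLeftComet, IsRightComet, IsTwoComet] : List (Language α → Prop)),
    ∀ Q ∈ ([IsSuffixClosed, IsCircular, IsCommutative] : List (Language α → Prop)),
    Incomparable P Q :=
  sydef_comets_incomparable_suf_circ_comm_general a b hab
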